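/- Every closed System T term t of type (ι ⇒ ι) ⇒ ι is uniformly continuous on the (embedded) Cantor space: there exists m : ℕ such that for all α, β : ℕ → Bool agreeing on the first m values, ⟦t⟧ (embed ∘ α) = ⟦t⟧ (embed ∘ β), where embed : Bool → ℕ sends false to 0 and true to 1. -/

import Mathlib

inductive Dialogue (I O X : Type) : Type
  | eta : X → Dialogue I O X
  | beta : (O → Dialogue I O X) → I → Dialogue I O X

def dialogue {I O X : Type} : Dialogue I O X → (I → O) → X
  | .eta x, _ => x
  | .beta φ i, α => dialogue (φ (α i)) α

def kleisli {I O X Y : Type} (f : X → Dialogue I O Y) : Dialogue I O X → Dialogue I O Y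
  | .eta x => f x
  | .beta φ i => .beta (fun o => kleisli f (φ o)) i

inductive Ty : Type
  | iota
  | arr : Ty → Ty → Ty

inductive Var : List Ty → Ty → Type
  | vz {Γ σ} : Var (σ :: Γ) σ
  | vs {Γ σ τ} : Var Γ σ → Var (τ :: Γ) σ

inductive Tm : List Ty → Ty → Type
  | var {Γ σ} : Var Γ σ → Tm Γ σ
  | zero {Γ} : Tm Γ .iota
  | succ {Γ} : Tm Γ .iota → Tm Γ .iota
  | recn {Γ σ} : Tm Γ (.arr .iota (.arr σ σ)) → Tm Γ σ → Tm Γ .iota → Tm Γ σ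
  | lam {Γ σ τ} : Tm (σ :: Γ) τ → Tm Γ (.arr σ τ)
  | app {Γ σ τ} : Tm Γ (.arr σ τ) → Tm Γ σ → Tm Γ τ

def natrec {X : Type} (f : ℕ → X → X) (x : X) : ℕ → X
  | 0 => x
  | n + 1 => f n (natrec f x n)

def Ty.set : Ty → Type
  | .iota => ℕ
  | .arr σ τ => σ.set → τ.set

def Env : List Ty → Type
  | [] => Unit
  | σ :: Γ => σ.set × Env Γ

def Var.eval : ∀ {Γ σ}, Var Γ σ → Env Γ → σ.set
  | _, _, .vz, γ => γ.1
  | _, _, .vs v, γ => v.eval γ.2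

def Tm.eval : ∀ {Γ σ}, Tm Γ σ → Env Γ → σ.set
  | _, _, .var v, γ => v.eval γ
  | _, _, .zero, _ => (0 : ℕ)
  | _, _, .succ t, γ => Nat.succ (Tm.eval t γ)
  | _, _, .recn f x n, γ => natrec (Tm.eval f γ) (Tm.eval x γ) (Tm.eval n γ)
  | _, _, .lam t, γ => fun x => Tm.eval t (x, γ)
  | _, _, .app t u, γ => Tm.eval t γ (Tm.eval u γ)

def Ty.dial : Ty → Type
  | .iota => Dialogue ℕ ℕ ℕ
  | .arr σ τ => σ.dial → τ.dial

def gk : ∀ σ : Ty, (ℕ → σ.dial) → Dialogue ℕ ℕ ℕ → σ.dial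
  | .iota, f, d => kleisli f d
  | .arr _ σ₂, f, d => fun s => gk σ₂ (fun x => f x s) d

def DEnv : List Ty → Type
  | [] => Unit
  | σ :: Γ => σ.dial × DEnv Γ

def Var.dial : ∀ {Γ σ}, Var Γ σ → DEnv Γ → σ.dial
  | _, _, .vz, γ => γ.1
  | _, _, .vs v, γ => v.dial γ.2

def Tm.dial : ∀ {Γ σ}, Tm Γ σ → DEnv Γ → σ.dial
  | _, _, .var v, γ => v.dial γ
  | _, _, .zero, _ => .eta 0
  | _, _, .succ t, γ => kleisli (fun n => .eta (n + 1)) (Tm.dial t γ)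
  | _, _, .recn f x n, γ =>
      gk _ (natrec (fun k => Tm.dial f γ (.eta k)) (Tm.dial x γ)) (Tm.dial n γ)
  | _, _, .lam t, γ => fun x => Tm.dial t (x, γ)
  | _, _, .app t u, γ => Tm.dial t γ (Tm.dial u γ)

def generic : Dialogue ℕ ℕ ℕ → Dialogue ℕ ℕ ℕ :=
  kleisli (fun n => .beta .eta n)

def dtree (t : Tm [] (.arr (.arr .iota .iota) .iota)) : Dialogue ℕ ℕ ℕ :=
  Tm.dial t () generic

def embed : Bool → ℕ
  | false => 0
  | true => 1

def RelD (α : ℕ → ℕ) : ∀ σ : Ty, σ.set → σ.dial → Prop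
  | .iota, n, d => n = dialogue d α
  | .arr σ τ, f, g => ∀ x d, RelD α σ x d → RelD α τ (f x) (g d)

def REnvD (α : ℕ → ℕ) : ∀ Γ : List Ty, Env Γ → DEnv Γ → Prop
  | [], _, _ => True
  | _ :: _, γ, δ => RelD α _ γ.1 δ.1 ∧ REnvD α _ γ.2 δ.2

theorem dialogue_kleisli {X Y : Type} (f : X → Dialogue ℕ ℕ Y) (d : Dialogue ℕ ℕ X)
    (α : ℕ → ℕ) : dialogue (kleisli f d) α = dialogue (f (dialogue d α)) α := by
  induction d with
  | eta x => rfl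
  | beta φ i ih => simp [kleisli, dialogue, ih]

theorem gk_rel (α : ℕ → ℕ) : ∀ (σ : Ty) (F : ℕ → σ.set) (f : ℕ → σ.dial),
    (∀ n, RelD α σ (F n) (f n)) → ∀ d : Dialogue ℕ ℕ ℕ,
    RelD α σ (F (dialogue d α)) (gk σ f d) := by
  intro σ
  induction σ with
  | iota =>
      intro F f h d
      simp only [RelD, gk, dialogue_kleisli]
      exact Eq.trans (h (dialogue d α)) (dialogue_kleisli (X := ℕ) (Y := ℕ) f d α).symm
  | arr σ₁ σ₂ ih₁ ih₂ =>
      intro F f h d x dx hx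
      exact ih₂ (fun n => F n x) (fun n => f n dx) (fun n => h n x dx hx) d

theorem var_rel (α : ℕ → ℕ) : ∀ {Γ σ} (v : Var Γ σ) (γ : Env Γ) (δ : DEnv Γ),
    REnvD α Γ γ δ → RelD α σ (v.eval γ) (v.dial δ) := by
  intro Γ σ v
  induction v with
  | vz => exact fun γ δ h => h.1
  | vs v ih => exact fun γ δ h => ih γ.2 δ.2 h.2

theorem fundamental (α : ℕ → ℕ) : ∀ {Γ σ} (t : Tm Γ σ) (γ : Env Γ) (δ : DEnv Γ),
    REnvD α Γ γ δ → RelD α σ (t.eval γ) (t.dial δ) := by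
  intro Γ σ t
  induction t with
  | var v => exact fun γ δ h => var_rel α v γ δ h
  | zero => intro γ δ h; rfl
  | succ t ih =>
      intro γ δ h
      have := ih γ δ h
      simp only [RelD] at this ⊢
      simp [Tm.eval, Tm.dial, dialogue_kleisli, this, dialogue]
      exact (dialogue_kleisli (X := ℕ) (Y := ℕ) (fun n => Dialogue.eta (n + 1)) (t.dial δ) α).symm
  | recn f x n ihf ihx ihn =>
      intro γ δ h
      have hn := ihn γ δ h
      simp only [RelD] at hn
      simp only [Tm.eval, Tm.dial, hn]
      apply gk_rel
      intro k
      induction k with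
      | zero => exact ihx γ δ h
      | succ k ihk =>
          exact ihf γ δ h k (.eta k) rfl _ _ ihk
  | lam t ih =>
      intro γ δ h x dx hx
      exact ih (x, γ) (dx, δ) ⟨hx, h⟩
  | app t u iht ihu =>
      intro γ δ h
      exact iht γ δ h _ _ (ihu γ δ h)

theorem generic_rel (α : ℕ → ℕ) : RelD α (.arr .iota .iota) α generic := by
  intro n d h
  simp only [RelD] at h ⊢
  simp [generic, dialogue_kleisli, dialogue, h]
  exact (dialogue_kleisli (X := ℕ) (Y := ℕ) (fun n => Dialogue.beta Dialogue.eta n) d α).symm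

theorem dtree_correct (t : Tm [] (.arr (.arr .iota .iota) .iota)) (α : ℕ → ℕ) :
    Tm.eval t () α = dialogue (dtree t) α :=
  fundamental α t () () trivial α generic (generic_rel α)

theorem dcont (d : Dialogue ℕ ℕ ℕ) :
    ∃ m : ℕ, ∀ α β : ℕ → Bool, (∀ k < m, α k = β k) →
      dialogue d (embed ∘ α) = dialogue d (embed ∘ β) := by
  induction d with
  | eta x => exact ⟨0, fun _ _ _ => rfl⟩
  | beta φ i ih =>
      obtain ⟨m0, h0⟩ := ih 0
      obtain ⟨m1, h1⟩ := ih 1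
      refine ⟨max (i + 1) (max m0 m1), fun α β h => ?_⟩
      have hi : α i = β i := h i (by omega)
      simp only [dialogue, Function.comp_apply, hi]
      cases β i with
      | false => exact h0 α β (fun k hk => h k (by omega))
      | true => exact h1 α β (fun k hk => h k (by omega))

theorem systemT_uniformly_continuous (t : Tm [] (.arr (.arr .iota .iota) .iota)) :
    ∃ m : ℕ, ∀ α β : ℕ → Bool,
      (∀ k < m, α k = β k) →
      Tm.eval t () (embed ∘ α) = Tm.eval t () (embed ∘ β) := by
  obtain ⟨m, h⟩ := dcont (dtree t)
  exact ⟨m, fun α β hab => by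
    exact (dtree_correct t _).trans ((h α β hab).trans (dtree_correct t _).symm)⟩
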